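/- arXiv:1112.5714 — 4 statements merged into one kernel-verified Lean document; each statement's English description precedes it below -/
import Mathlib

section
/- Let F_q be a finite field of characteristic p ≥ 3 and u, v ∈ F_q \ {0,1}. The Legendre curves E_{L,u}: Y^2 = X(X-1)(X-u) and E_{L,v}: Y^2 = X(X-1)(X-v) are isomorphic over F_q if and only if one of the following holds: (1) v = u; (2) v = 1/u and u is a square in F_q; (3) v = 1-u and -1 is a square; (4) v = 1/(1-u) and u-1 is a square; (5) v = (u-1)/u and -u is a square; (6) v = u/(u-1) and 1-u is a square. -/
/-!
The substitution `X = α²X̃ + β` is an affine bijection carrying the roots `{0, 1, v}` of the second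
curve onto the roots `{0, 1, u}` of the first. Since `0, 1, u` are distinct, it sends `(0, 1, v)`
to a permutation `(s, t, w)` of `(0, 1, u)`, which forces `β = s`, `α² = t - s` and
`v = (w - s) / (t - s)`. The six permutations give the six cases, each subject to `t - s` being a
square.
-/

/-- `F_q`-isomorphism of Legendre curves `Y² = X(X-1)(X-u)`: there is an admissible change of
variables `X ↦ α²X̃ + β` carrying the root set `{0, 1, u}` onto `{0, 1, v}` (after scaling). -/
def LegendreIso (F : Type*) [Field F] (u v : F) : Prop :=
  ∃ α β : F, α ≠ 0 ∧
    ({-β / α ^ 2, (1 - β) / α ^ 2, (u - β) / α ^ 2} : Set F) = {0, 1, v}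

theorem Set.triple_eq_triple_iff {α : Type*} {a b c x y z : α}
    (hxy : x ≠ y) (hxz : x ≠ z) (hyz : y ≠ z) :
    ({a, b, c} : Set α) = {x, y, z} ↔
      (a, b, c) = (x, y, z) ∨ (a, b, c) = (x, z, y) ∨ (a, b, c) = (y, x, z) ∨
      (a, b, c) = (y, z, x) ∨ (a, b, c) = (z, x, y) ∨ (a, b, c) = (z, y, x) := by
  simp only [Set.ext_iff, Set.mem_insert_iff, Set.mem_singleton_iff, Prod.mk.injEq]
  constructor
  · intro h
    have ha := (h a).1 (by simp)
    have hb := (h b).1 (by simp)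
    have hc := (h c).1 (by simp)
    have hx := (h x).2 (by simp)
    have hy := (h y).2 (by simp)
    have hz := (h z).2 (by simp)
    grind
  · rintro (h | h | h | h | h | h) <;> grind

theorem sub_div_triple_eq_iff {F : Type*} [Field F] {γ : F} (hγ : γ ≠ 0) (β a b c x y z : F) :
    ({(a - β) / γ, (b - β) / γ, (c - β) / γ} : Set F) = {x, y, z} ↔
      ({β + γ * x, β + γ * y, β + γ * z} : Set F) = {a, b, c} := by
  have hinj : Function.Injective (fun t : F => β + γ * t) := fun s t h => by
    simpa [hγ] using h
  rw [← (Set.image_injective.mpr hinj).eq_iff, eq_comm]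
  simp only [Set.image_insert_eq, Set.image_singleton]
  field_simp
  simp

theorem legendreIso_iff_exists_affine {F : Type*} [Field F] (u v : F) :
    LegendreIso F u v ↔
      ∃ β γ : F, γ ≠ 0 ∧ IsSquare γ ∧ ({β, β + γ, β + γ * v} : Set F) = {0, 1, u} := by
  have key : ∀ α β : F, α ≠ 0 →
      (({-β / α ^ 2, (1 - β) / α ^ 2, (u - β) / α ^ 2} : Set F) = {0, 1, v} ↔
        ({β, β + α ^ 2, β + α ^ 2 * v} : Set F) = {0, 1, u}) := fun α β hα => by
    rw [← zero_sub, sub_div_triple_eq_iff (pow_ne_zero 2 hα), mul_zero, add_zero, mul_one]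
  constructor
  · rintro ⟨α, β, hα, h⟩
    exact ⟨β, α ^ 2, pow_ne_zero 2 hα, IsSquare.sq α, (key α β hα).1 h⟩
  · rintro ⟨β, γ, hγ, ⟨α, rfl⟩, h⟩
    have hα : α ≠ 0 := by rintro rfl; simp at hγ
    exact ⟨α, β, hα, (key α β hα).2 (by rwa [sq])⟩

theorem exists_affine_eq_iff {F : Type*} [Field F] {s t : F} (hst : s ≠ t) (w v : F) :
    (∃ β γ : F, γ ≠ 0 ∧ IsSquare γ ∧ (β, β + γ, β + γ * v) = (s, t, w)) ↔
      v = (w - s) / (t - s) ∧ IsSquare (t - s) := by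
  have hts : t - s ≠ 0 := sub_ne_zero.mpr hst.symm
  simp only [Prod.mk.injEq]
  constructor
  · rintro ⟨β, γ, hγ, hsq, rfl, rfl, rfl⟩
    simp only [add_sub_cancel_left]
    exact ⟨by field_simp, hsq⟩
  · rintro ⟨rfl, hsq⟩
    refine ⟨s, t - s, hts, hsq, rfl, by ring, by field_simp; ring⟩

theorem legendre_iso_iff_general
    (F : Type*) [Field F]
    (u v : F) (hu0 : u ≠ 0) (hu1 : u ≠ 1) :
    LegendreIso F u v ↔
      v = u ∨
      (v = 1 / u ∧ IsSquare u) ∨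
      (v = 1 - u ∧ IsSquare (-1 : F)) ∨
      (v = 1 / (1 - u) ∧ IsSquare (u - 1)) ∨
      (v = (u - 1) / u ∧ IsSquare (-u)) ∨
      (v = u / (u - 1) ∧ IsSquare (1 - u)) := by
  have h01 : (0 : F) ≠ 1 := zero_ne_one
  have h0u : (0 : F) ≠ u := hu0.symm
  have h1u : (1 : F) ≠ u := hu1.symm
  simp only [legendreIso_iff_exists_affine, Set.triple_eq_triple_iff h01 h0u h1u, and_or_left, exists_or,
    exists_affine_eq_iff h01, exists_affine_eq_iff h0u, exists_affine_eq_iff h01.symm,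
    exists_affine_eq_iff h1u, exists_affine_eq_iff h0u.symm, exists_affine_eq_iff h1u.symm]
  have e1 : (u - 1) / (0 - 1) = 1 - u := by ring
  have e2 : (0 - 1) / (u - 1) = 1 / (1 - u) := by rw [← neg_sub 1 u, zero_sub, neg_div_neg_eq]
  have e3 : (1 - u) / (0 - u) = (u - 1) / u := by rw [← neg_sub u 1, zero_sub, neg_div_neg_eq]
  have e4 : (0 - u) / (1 - u) = u / (u - 1) := by rw [← neg_sub u 1, zero_sub, neg_div_neg_eq]
  rw [e1, e2, e3, e4]
  simp only [sub_zero, div_one, zero_sub, IsSquare.one, and_true]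

/-- Criterion for two Legendre curves over a finite field of odd characteristic to be
isomorphic over the ground field. -/
theorem legendre_iso_iff
    (F : Type*) [Field F] [Fintype F] (p : ℕ) [Fact p.Prime] [CharP F p] (hp : 3 ≤ p)
    (u v : F) (hu0 : u ≠ 0) (hu1 : u ≠ 1) (hv0 : v ≠ 0) (hv1 : v ≠ 1) :
    LegendreIso F u v ↔
      v = u ∨
      (v = 1 / u ∧ IsSquare u) ∨
      (v = 1 - u ∧ IsSquare (-1 : F)) ∨
      (v = 1 / (1 - u) ∧ IsSquare (u - 1)) ∨
      (v = (u - 1) / u ∧ IsSquare (-u)) ∨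
      (v = u / (u - 1) ∧ IsSquare (1 - u)) :=
  legendre_iso_iff_general F u v hu0 hu1
end

section
/- Let F_q be a finite field of characteristic p ≥ 3. The number of distinct values of the rational function j(u) = 2^8 (u^2-u+1)^3/(u^2-u)^2 as u ranges over F_q \ {0,1} equals ⌊(q+5)/6⌋. Equivalently, the number of distinct j-invariants of Legendre curves over F_q is ⌊(q+5)/6⌋. -/
open Finset

section LegendreJAux

variable {F : Type*} [Field F]

/-- The `j`-invariant of the Legendre curve. -/
def legJ (u : F) : F := 2 ^ 8 * (u ^ 2 - u + 1) ^ 3 / (u ^ 2 - u) ^ 2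

lemma legJ_sq_sub_ne {u : F} (h0 : u ≠ 0) (h1 : u ≠ 1) : u ^ 2 - u ≠ 0 := by
  have h : u ^ 2 - u = u * (u - 1) := by ring
  rw [h]
  exact mul_ne_zero h0 (sub_ne_zero.mpr h1)

lemma legJ_eq_iff {u y : F} (h0 : u ≠ 0) (h1 : u ≠ 1) :
    legJ u = y ↔ 2 ^ 8 * (u ^ 2 - u + 1) ^ 3 = y * (u ^ 2 - u) ^ 2 :=
  div_eq_iff (pow_ne_zero 2 (legJ_sq_sub_ne h0 h1))

lemma legJ_eq_zero_iff {u : F} (h0 : u ≠ 0) (h1 : u ≠ 1) (h2 : (2 : F) ≠ 0) :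
    legJ u = 0 ↔ u ^ 2 - u + 1 = 0 := by
  rw [legJ_eq_iff h0 h1, zero_mul]
  constructor
  · intro h
    rcases mul_eq_zero.mp h with h' | h'
    · exact absurd h' (pow_ne_zero 8 h2)
    · exact pow_eq_zero_iff three_ne_zero |>.mp h'
  · intro h; rw [h]; ring

lemma legJ_eq_1728_iff {u : F} (h0 : u ≠ 0) (h1 : u ≠ 1) (h2 : (2 : F) ≠ 0) :
    legJ u = 1728 ↔ (u + 1) * (u - 2) = 0 ∨ 2 * u - 1 = 0 := by
  rw [legJ_eq_iff h0 h1]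
  constructor
  · intro h
    have key : (64 : F) * ((u + 1) * (u - 2)) ^ 2 * (2 * u - 1) ^ 2 = 0 := by
      linear_combination h
    rcases mul_eq_zero.mp key with h' | h'
    · rcases mul_eq_zero.mp h' with h'' | h''
      · exact absurd h'' (by
          have h64 : (64 : F) = 2 ^ 6 := by norm_num
          rw [h64]; exact pow_ne_zero 6 h2)
      · exact Or.inl (pow_eq_zero_iff two_ne_zero |>.mp h'')
    · exact Or.inr (pow_eq_zero_iff two_ne_zero |>.mp h')
  · intro h
    rcases h with h | h
    · linear_combination (64 * ((u + 1) * (u - 2)) * (2 * u - 1) ^ 2) * h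
    · linear_combination (64 * ((u + 1) * (u - 2)) ^ 2 * (2 * u - 1)) * h

lemma legJ_eq_legJ {v u : F} (hv0 : v ≠ 0) (hv1 : v ≠ 1) (hu0 : u ≠ 0) (hu1 : u ≠ 1)
    (h : (v ^ 2 - v + 1) ^ 3 * (u ^ 2 - u) ^ 2 = (u ^ 2 - u + 1) ^ 3 * (v ^ 2 - v) ^ 2) :
    legJ v = legJ u := by
  unfold legJ
  rw [div_eq_div_iff (pow_ne_zero 2 (legJ_sq_sub_ne hv0 hv1))
    (pow_ne_zero 2 (legJ_sq_sub_ne hu0 hu1))]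
  linear_combination (2 ^ 8 : F) * h

lemma legJ_fiber_subset {u v : F} (hu0 : u ≠ 0) (hu1 : u ≠ 1) (hv0 : v ≠ 0) (hv1 : v ≠ 1)
    (h2 : (2 : F) ≠ 0) (h : legJ v = legJ u) :
    v = u ∨ v = u⁻¹ ∨ v = 1 - u ∨ v = (1 - u)⁻¹ ∨ v = (u - 1) / u ∨ v = u / (u - 1) := by
  have n1 : u - 1 ≠ 0 := sub_ne_zero.mpr hu1
  have n1' : 1 - u ≠ 0 := sub_ne_zero.mpr (Ne.symm hu1)
  unfold legJ at h
  rw [div_eq_div_iff (pow_ne_zero 2 (legJ_sq_sub_ne hv0 hv1))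
    (pow_ne_zero 2 (legJ_sq_sub_ne hu0 hu1))] at h
  have key2 : (2 : F) ^ 8 * ((v - u) * ((v * u - 1) * ((v + u - 1) * ((v * u - v + 1) *
      ((v * u - u + 1) * (v * u - v - u)))))) = 0 := by linear_combination h
  have key := (mul_eq_zero.mp key2).resolve_left (pow_ne_zero 8 h2)
  rcases mul_eq_zero.mp key with h' | key
  · exact Or.inl (sub_eq_zero.mp h')
  rcases mul_eq_zero.mp key with h' | key
  · refine Or.inr (Or.inl ?_); field_simp; linear_combination h'
  rcases mul_eq_zero.mp key with h' | key
  · refine Or.inr (Or.inr (Or.inl ?_)); linear_combination h'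
  rcases mul_eq_zero.mp key with h' | key
  · refine Or.inr (Or.inr (Or.inr (Or.inl ?_))); field_simp; linear_combination -h'
  rcases mul_eq_zero.mp key with h' | key
  · refine Or.inr (Or.inr (Or.inr (Or.inr (Or.inl ?_)))); field_simp; linear_combination h'
  · refine Or.inr (Or.inr (Or.inr (Or.inr (Or.inr ?_)))); field_simp; linear_combination key

lemma legJ_orbit [DecidableEq F] {u : F} (h0 : u ≠ 0) (h1 : u ≠ 1) :
    ∀ v ∈ ({u, u⁻¹, 1 - u, (1 - u)⁻¹, (u - 1) / u, u / (u - 1)} : Finset F),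
      (v ≠ 0 ∧ v ≠ 1) ∧ legJ v = legJ u := by
  have n1 : u - 1 ≠ 0 := sub_ne_zero.mpr h1
  have n1' : 1 - u ≠ 0 := sub_ne_zero.mpr (Ne.symm h1)
  intro v hv
  simp only [mem_insert, mem_singleton] at hv
  rcases hv with rfl | rfl | rfl | rfl | rfl | rfl
  · exact ⟨⟨h0, h1⟩, rfl⟩
  · refine ⟨⟨inv_ne_zero h0, ?_⟩, legJ_eq_legJ (inv_ne_zero h0) ?_ h0 h1 (by field_simp; ring)⟩
    all_goals intro h; exact h1 (by rw [← inv_inv u, h, inv_one])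
  · refine ⟨⟨n1', fun h => h0 (by linear_combination -h)⟩,
      legJ_eq_legJ n1' (fun h => h0 (by linear_combination -h)) h0 h1 (by ring)⟩
  · refine ⟨⟨inv_ne_zero n1', ?_⟩, legJ_eq_legJ (inv_ne_zero n1') ?_ h0 h1 (by field_simp; ring)⟩
    all_goals intro h; rw [inv_eq_one] at h; exact h0 (by linear_combination -h)
  · refine ⟨⟨div_ne_zero n1 h0, ?_⟩,
      legJ_eq_legJ (div_ne_zero n1 h0) ?_ h0 h1 (by field_simp; ring)⟩
    all_goals intro h; rw [div_eq_one_iff_eq h0] at h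
    all_goals exact one_ne_zero (α := F) (by linear_combination -h)
  · refine ⟨⟨div_ne_zero h0 n1, ?_⟩,
      legJ_eq_legJ (div_ne_zero h0 n1) ?_ h0 h1 (by field_simp; ring)⟩
    all_goals intro h; rw [div_eq_one_iff_eq n1] at h
    all_goals exact one_ne_zero (α := F) (by linear_combination h)

lemma legJ_orbit_card [DecidableEq F] {u : F} (h0 : u ≠ 0) (h1 : u ≠ 1) (hm1 : u + 1 ≠ 0)
    (hd2 : u - 2 ≠ 0) (hd3 : 2 * u - 1 ≠ 0) (hA : u ^ 2 - u + 1 ≠ 0) :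
    ({u, u⁻¹, 1 - u, (1 - u)⁻¹, (u - 1) / u, u / (u - 1)} : Finset F).card = 6 := by
  have n1 : u - 1 ≠ 0 := sub_ne_zero.mpr h1
  have n1' : 1 - u ≠ 0 := sub_ne_zero.mpr (Ne.symm h1)
  have E2 : u⁻¹ * (u * (u - 1)) = u - 1 := by rw [inv_mul_eq_iff_eq_mul₀ h0]
  have E4 : (1 - u)⁻¹ * (u * (u - 1)) = -u := by rw [inv_mul_eq_iff_eq_mul₀ n1']; ring
  have E5 : (u - 1) / u * (u * (u - 1)) = (u - 1) ^ 2 := by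
    rw [div_mul_eq_mul_div, div_eq_iff h0]; ring
  have E6 : u / (u - 1) * (u * (u - 1)) = u ^ 2 := by
    rw [div_mul_eq_mul_div, div_eq_iff n1]; ring
  have step : ∀ a b : F, a * (u * (u - 1)) ≠ b * (u * (u - 1)) → a ≠ b := by
    intro a b hab h; exact hab (by rw [h])
  have d12 : u ≠ u⁻¹ := step _ _ (by
    rw [E2]; intro h
    exact mul_ne_zero (mul_ne_zero n1 n1) hm1 (by linear_combination h))
  have d13 : u ≠ 1 - u := step _ _ (by
    intro h
    exact mul_ne_zero (mul_ne_zero h0 n1) hd3 (by linear_combination h))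
  have d14 : u ≠ (1 - u)⁻¹ := step _ _ (by
    rw [E4]; intro h
    exact mul_ne_zero h0 hA (by linear_combination h))
  have d15 : u ≠ (u - 1) / u := step _ _ (by
    rw [E5]; intro h
    exact mul_ne_zero n1 hA (by linear_combination h))
  have d16 : u ≠ u / (u - 1) := step _ _ (by
    rw [E6]; intro h
    exact mul_ne_zero (mul_ne_zero h0 h0) hd2 (by linear_combination h))
  have d23 : u⁻¹ ≠ 1 - u := step _ _ (by
    rw [E2]; intro h
    exact mul_ne_zero n1 hA (by linear_combination h))
  have d24 : u⁻¹ ≠ (1 - u)⁻¹ := step _ _ (by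
    rw [E2, E4]; intro h
    exact hd3 (by linear_combination h))
  have d25 : u⁻¹ ≠ (u - 1) / u := step _ _ (by
    rw [E2, E5]; intro h
    exact mul_ne_zero n1 hd2 (by linear_combination -h))
  have d26 : u⁻¹ ≠ u / (u - 1) := step _ _ (by
    rw [E2, E6]; intro h
    exact hA (by linear_combination -h))
  have d34 : (1 - u) ≠ (1 - u)⁻¹ := step _ _ (by
    rw [E4]; intro h
    exact mul_ne_zero (mul_ne_zero h0 h0) hd2 (by linear_combination -h))
  have d35 : (1 - u) ≠ (u - 1) / u := step _ _ (by
    rw [E5]; intro h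
    exact mul_ne_zero (mul_ne_zero n1 n1) hm1 (by linear_combination -h))
  have d36 : (1 - u) ≠ u / (u - 1) := step _ _ (by
    rw [E6]; intro h
    exact mul_ne_zero h0 hA (by linear_combination -h))
  have d45 : (1 - u)⁻¹ ≠ (u - 1) / u := step _ _ (by
    rw [E4, E5]; intro h
    exact hA (by linear_combination -h))
  have d46 : (1 - u)⁻¹ ≠ u / (u - 1) := step _ _ (by
    rw [E4, E6]; intro h
    exact mul_ne_zero h0 hm1 (by linear_combination -h))
  have d56 : (u - 1) / u ≠ u / (u - 1) := step _ _ (by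
    rw [E5, E6]; intro h
    exact hd3 (by linear_combination -h))
  rw [card_insert_of_notMem (by
      simp only [mem_insert, mem_singleton]; push_neg
      exact ⟨d12, d13, d14, d15, d16⟩),
    card_insert_of_notMem (by
      simp only [mem_insert, mem_singleton]; push_neg
      exact ⟨d23, d24, d25, d26⟩),
    card_insert_of_notMem (by
      simp only [mem_insert, mem_singleton]; push_neg
      exact ⟨d34, d35, d36⟩),
    card_insert_of_notMem (by
      simp only [mem_insert, mem_singleton]; push_neg
      exact ⟨d45, d46⟩),
    card_pair d56]

end LegendreJAux

set_option maxHeartbeats 1000000 in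
/-- The number of distinct `j`-invariants `2⁸(u²-u+1)³/(u²-u)²` of Legendre curves over a finite
field of odd characteristic is `⌊(q+5)/6⌋`. -/
theorem legendre_j_count
    (F : Type*) [Field F] [Fintype F] (p : ℕ) [Fact p.Prime] [CharP F p] (hp : 3 ≤ p) :
    ((fun u : F => 2 ^ 8 * (u ^ 2 - u + 1) ^ 3 / (u ^ 2 - u) ^ 2) ''
        {u : F | u ≠ 0 ∧ u ≠ 1}).ncard = (Fintype.card F + 5) / 6 := by
  classical
  have hprime : p.Prime := Fact.out
  have h2 : (2 : F) ≠ 0 := by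
    intro h
    have hd := (CharP.cast_eq_zero_iff F p 2).mp h
    have := Nat.le_of_dvd (by norm_num) hd
    omega
  have hi : (2 : F) * 2⁻¹ = 1 := mul_inv_cancel₀ h2
  set D : Finset F := univ.filter (fun u => u ≠ 0 ∧ u ≠ 1) with hD
  have himg : ((fun u : F => 2 ^ 8 * (u ^ 2 - u + 1) ^ 3 / (u ^ 2 - u) ^ 2) ''
      {u : F | u ≠ 0 ∧ u ≠ 1}) = ↑(D.image legJ) := by
    ext y
    simp [hD, legJ, Set.mem_image]
  rw [himg, Set.ncard_coe_finset]
  have hDcard : D.card = Fintype.card F - 2 := by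
    have h : D = univ \ {0, 1} := by ext x; simp [hD, and_comm]
    rw [h, card_sdiff_of_subset (subset_univ _), card_pair (zero_ne_one), card_univ]
  have hq2 : 2 ≤ Fintype.card F := Fintype.one_lt_card
  set Zc : Finset F := D.filter (fun u => legJ u = 0 ∨ legJ u = 1728) with hZ
  set C : Finset F := D.filter (fun u => ¬(legJ u = 0 ∨ legJ u = 1728)) with hC
  have hsplit : Zc.card + C.card = D.card := card_filter_add_card_filter_not _
  have hCZ : C ∪ Zc = D := by ext x; simp only [hC, hZ, mem_union, mem_filter]; tauto
  have himage_split : D.image legJ = C.image legJ ∪ Zc.image legJ := by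
    rw [← image_union, hCZ]
  have hdisj : Disjoint (C.image legJ) (Zc.image legJ) := by
    rw [disjoint_left]
    rintro y hyC hyZ
    obtain ⟨a, ha, rfl⟩ := mem_image.mp hyC
    obtain ⟨b, hb, hba⟩ := mem_image.mp hyZ
    exact (mem_filter.mp ha).2 (hba ▸ (mem_filter.mp hb).2)
  have hIcard : (D.image legJ).card = (C.image legJ).card + (Zc.image legJ).card := by
    rw [himage_split, card_union_of_disjoint hdisj]
  -- the generic fibers have six elements
  have hC6 : C.card = (C.image legJ).card * 6 := by
    rw [Finset.card_eq_sum_card_image legJ C]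
    rw [Finset.sum_congr rfl ?_, Finset.sum_const, smul_eq_mul]
    intro y hy
    obtain ⟨u, huC, rfl⟩ := mem_image.mp hy
    have huD := (mem_filter.mp huC).1
    have hnot := (mem_filter.mp huC).2
    obtain ⟨-, h0, h1⟩ := mem_filter.mp huD
    push_neg at hnot
    obtain ⟨hne0, hne1728⟩ := hnot
    have hA : u ^ 2 - u + 1 ≠ 0 := fun h => hne0 ((legJ_eq_zero_iff h0 h1 h2).mpr h)
    have h1728' : ¬((u + 1) * (u - 2) = 0 ∨ 2 * u - 1 = 0) :=
      fun h => hne1728 ((legJ_eq_1728_iff h0 h1 h2).mpr h)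
    push_neg at h1728'
    obtain ⟨hprod, hd3⟩ := h1728'
    have hm1 : u + 1 ≠ 0 := fun h => hprod (by rw [h, zero_mul])
    have hd2 : u - 2 ≠ 0 := fun h => hprod (by rw [h, mul_zero])
    have hfib : C.filter (fun a => legJ a = legJ u) =
        ({u, u⁻¹, 1 - u, (1 - u)⁻¹, (u - 1) / u, u / (u - 1)} : Finset F) := by
      ext v
      constructor
      · intro hv
        obtain ⟨hvC, hvj⟩ := mem_filter.mp hv
        obtain ⟨hvD, -⟩ := mem_filter.mp hvC
        obtain ⟨-, hv0, hv1⟩ := mem_filter.mp hvD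
        have := legJ_fiber_subset h0 h1 hv0 hv1 h2 hvj
        simpa [mem_insert, mem_singleton] using this
      · intro hv
        obtain ⟨⟨hv0, hv1⟩, hvj⟩ := legJ_orbit h0 h1 v hv
        refine mem_filter.mpr ⟨mem_filter.mpr ⟨mem_filter.mpr ⟨mem_univ v, hv0, hv1⟩, ?_⟩, hvj⟩
        rw [hvj]
        push_neg
        exact ⟨hne0, hne1728⟩
    rw [hfib]
    exact legJ_orbit_card h0 h1 hm1 hd2 hd3 hA
  -- characterization of the special locus
  have hZmem : ∀ v : F, v ∈ Zc ↔ (v ≠ 0 ∧ v ≠ 1) ∧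
      (v ^ 2 - v + 1 = 0 ∨ (v + 1) * (v - 2) = 0 ∨ 2 * v - 1 = 0) := by
    intro v
    rw [hZ, mem_filter, hD, mem_filter]
    simp only [mem_univ, true_and]
    constructor
    · rintro ⟨⟨hv0, hv1⟩, h⟩
      refine ⟨⟨hv0, hv1⟩, ?_⟩
      rcases h with h | h
      · exact Or.inl ((legJ_eq_zero_iff hv0 hv1 h2).mp h)
      · exact Or.inr ((legJ_eq_1728_iff hv0 hv1 h2).mp h)
    · rintro ⟨⟨hv0, hv1⟩, h⟩
      refine ⟨⟨hv0, hv1⟩, ?_⟩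
      rcases h with h | h
      · exact Or.inl ((legJ_eq_zero_iff hv0 hv1 h2).mpr h)
      · exact Or.inr ((legJ_eq_1728_iff hv0 hv1 h2).mpr h)
  -- facts about -1, 2, 2⁻¹
  have hn10 : (-1 : F) ≠ 0 := neg_ne_zero.mpr one_ne_zero
  have hn11 : (-1 : F) ≠ 1 := fun h => h2 (by linear_combination -h)
  have h20 : (2 : F) ≠ 0 := h2
  have h21 : (2 : F) ≠ 1 := fun h => one_ne_zero (α := F) (by linear_combination h)
  have hi0 : (2 : F)⁻¹ ≠ 0 := inv_ne_zero h2
  have hi1 : (2 : F)⁻¹ ≠ 1 := by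
    intro h; rw [h, mul_one] at hi; exact one_ne_zero (α := F) (by linear_combination hi)
  have hmem1 : (-1 : F) ∈ Zc := (hZmem (-1)).mpr
    ⟨⟨hn10, hn11⟩, Or.inr (Or.inl (by rw [show ((-1 : F) + 1) = 0 by ring, zero_mul]))⟩
  have hmem2 : (2 : F) ∈ Zc := (hZmem 2).mpr
    ⟨⟨h20, h21⟩, Or.inr (Or.inl (by rw [show ((2 : F) - 2) = 0 by ring, mul_zero]))⟩
  have hmem3 : (2 : F)⁻¹ ∈ Zc := (hZmem 2⁻¹).mpr
    ⟨⟨hi0, hi1⟩, Or.inr (Or.inr (by linear_combination hi))⟩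
  have hval1 : legJ (-1 : F) = 1728 := (legJ_eq_1728_iff hn10 hn11 h2).mpr
    (Or.inl (by rw [show ((-1 : F) + 1) = 0 by ring, zero_mul]))
  have hval2 : legJ (2 : F) = 1728 := (legJ_eq_1728_iff h20 h21 h2).mpr
    (Or.inl (by rw [show ((2 : F) - 2) = 0 by ring, mul_zero]))
  have hval3 : legJ (2 : F)⁻¹ = 1728 := (legJ_eq_1728_iff hi0 hi1 h2).mpr
    (Or.inr (by linear_combination hi))
  -- case split on the characteristic
  by_cases h3 : (3 : F) = 0
  · -- characteristic three
    have h1728 : (1728 : F) = 0 := by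
      have he : (1728 : F) = 3 * 576 := by norm_num
      rw [he, h3, zero_mul]
    have hZeq : Zc = {-1} := by
      ext v
      rw [hZmem, mem_singleton]
      constructor
      · rintro ⟨⟨hv0, hv1⟩, h⟩
        rcases h with h | h | h
        · have hsq : (v + 1) ^ 2 = 0 := by linear_combination h + v * h3
          have := pow_eq_zero_iff two_ne_zero |>.mp hsq
          linear_combination this
        · rcases mul_eq_zero.mp h with h | h
          · linear_combination h
          · linear_combination h + h3
        · linear_combination -h + v * h3
      · rintro rfl
        exact ((hZmem (-1)).mp hmem1).2 |>.elim (fun h => ⟨⟨hn10, hn11⟩, Or.inl h⟩)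
          (fun h => ⟨⟨hn10, hn11⟩, Or.inr h⟩)
    have hZcard : Zc.card = 1 := by rw [hZeq, card_singleton]
    have hZimg : (Zc.image legJ).card = 1 := by rw [hZeq, image_singleton, card_singleton]
    omega
  · -- characteristic at least five
    have h1728 : (1728 : F) ≠ 0 := by
      have he : (1728 : F) = 2 ^ 6 * 3 ^ 3 := by norm_num
      rw [he]
      exact mul_ne_zero (pow_ne_zero 6 h2) (pow_ne_zero 3 h3)
    have d12 : (-1 : F) ≠ 2 := fun h => h3 (by linear_combination -h)
    have d13 : (-1 : F) ≠ 2⁻¹ := fun h => h3 (by linear_combination -2 * h - hi)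
    have d23 : (2 : F) ≠ 2⁻¹ := fun h => h3 (by linear_combination 2 * h + hi)
    by_cases hroot : ∃ a : F, a ^ 2 - a + 1 = 0
    · obtain ⟨a, ha⟩ := hroot
      have ha0 : a ≠ 0 := fun h => one_ne_zero (α := F) (by rw [h] at ha; linear_combination ha)
      have ha1 : a ≠ 1 := fun h => one_ne_zero (α := F) (by rw [h] at ha; linear_combination ha)
      have hb : (1 - a) ^ 2 - (1 - a) + 1 = 0 := by linear_combination ha
      have hb0 : (1 : F) - a ≠ 0 := fun h => ha1 (by linear_combination -h)
      have hb1 : (1 : F) - a ≠ 1 := fun h => ha0 (by linear_combination -h)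
      have dab : a ≠ 1 - a := fun h => h3 (by linear_combination 4 * ha - (2 * a - 1) * h)
      have da1 : a ≠ -1 := fun h => h3 (by linear_combination ha - (a - 2) * h)
      have da2 : a ≠ 2 := fun h => h3 (by linear_combination ha - (a + 1) * h)
      have da3 : a ≠ 2⁻¹ := by
        intro h
        have h'' : 2 * a - 1 = 0 := by linear_combination 2 * h + hi
        exact h3 (by linear_combination 4 * ha - (2 * a - 1) * h'')
      have db1 : (1 : F) - a ≠ -1 := fun h => da2 (by linear_combination -h)
      have db2 : (1 : F) - a ≠ 2 := fun h => da1 (by linear_combination -h)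
      have db3 : (1 : F) - a ≠ 2⁻¹ := by
        intro h
        have h'' : 2 * a - 1 = 0 := by linear_combination -2 * h - hi
        exact h3 (by linear_combination 4 * ha - (2 * a - 1) * h'')
      have hZeq : Zc = {a, 1 - a, -1, 2, 2⁻¹} := by
        ext v
        rw [hZmem]
        simp only [mem_insert, mem_singleton]
        constructor
        · rintro ⟨⟨hv0, hv1⟩, h⟩
          rcases h with h | h | h
          · have hfac : (v - a) * (v - (1 - a)) = 0 := by linear_combination h - ha
            rcases mul_eq_zero.mp hfac with h' | h'
            · exact Or.inl (sub_eq_zero.mp h')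
            · exact Or.inr (Or.inl (sub_eq_zero.mp h'))
          · rcases mul_eq_zero.mp h with h' | h'
            · exact Or.inr (Or.inr (Or.inl (by linear_combination h')))
            · exact Or.inr (Or.inr (Or.inr (Or.inl (by linear_combination h'))))
          · refine Or.inr (Or.inr (Or.inr (Or.inr ?_)))
            exact eq_inv_of_mul_eq_one_left (by linear_combination h)
        · intro h
          rcases h with rfl | rfl | rfl | rfl | rfl
          · exact ⟨⟨ha0, ha1⟩, Or.inl ha⟩
          · exact ⟨⟨hb0, hb1⟩, Or.inl hb⟩
          · exact ((hZmem (-1)).mp hmem1)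
          · exact ((hZmem 2).mp hmem2)
          · exact ((hZmem 2⁻¹).mp hmem3)
      have hZcard : Zc.card = 5 := by
        rw [hZeq]
        rw [card_insert_of_notMem (by
            simp only [mem_insert, mem_singleton]; push_neg
            exact ⟨dab, da1, da2, da3⟩),
          card_insert_of_notMem (by
            simp only [mem_insert, mem_singleton]; push_neg
            exact ⟨db1, db2, db3⟩),
          card_insert_of_notMem (by
            simp only [mem_insert, mem_singleton]; push_neg
            exact ⟨d12, d13⟩),
          card_insert_of_notMem (by simp only [mem_singleton]; exact d23),
          card_singleton]
      have hvala : legJ a = 0 := (legJ_eq_zero_iff ha0 ha1 h2).mpr ha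
      have hvalb : legJ (1 - a) = 0 := (legJ_eq_zero_iff hb0 hb1 h2).mpr hb
      have hZimg : (Zc.image legJ).card = 2 := by
        have himg2 : Zc.image legJ = {0, 1728} := by
          rw [hZeq]
          simp only [image_insert, image_singleton, hvala, hvalb, hval1, hval2, hval3]
          ext y
          simp only [mem_insert, mem_singleton]
          tauto
        rw [himg2, card_pair (Ne.symm h1728)]
      omega
    · have hZeq : Zc = {-1, 2, 2⁻¹} := by
        ext v
        rw [hZmem]
        simp only [mem_insert, mem_singleton]
        constructor
        · rintro ⟨⟨hv0, hv1⟩, h⟩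
          rcases h with h | h | h
          · exact absurd ⟨v, h⟩ hroot
          · rcases mul_eq_zero.mp h with h' | h'
            · exact Or.inl (by linear_combination h')
            · exact Or.inr (Or.inl (by linear_combination h'))
          · exact Or.inr (Or.inr (eq_inv_of_mul_eq_one_left (by linear_combination h)))
        · intro h
          rcases h with rfl | rfl | rfl
          · exact ((hZmem (-1)).mp hmem1)
          · exact ((hZmem 2).mp hmem2)
          · exact ((hZmem 2⁻¹).mp hmem3)
      have hZcard : Zc.card = 3 := by
        rw [hZeq]
        rw [card_insert_of_notMem (by
            simp only [mem_insert, mem_singleton]; push_neg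
            exact ⟨d12, d13⟩),
          card_insert_of_notMem (by simp only [mem_singleton]; exact d23),
          card_singleton]
      have hZimg : (Zc.image legJ).card = 1 := by
        have himg2 : Zc.image legJ = {1728} := by
          rw [hZeq]
          simp only [image_insert, image_singleton, hval1, hval2, hval3]
          ext y
          simp only [mem_insert, mem_singleton]
          tauto
        rw [himg2, card_singleton]
      omega
end

section
/- Let F_q be a finite field with q ≡ 1 (mod 3) and let v ∈ F_q^* be a non-cube. Then the set J_{GH,v} of j-invariants of generalized Hessian curves E_{GH,u,v}: X^3+Y^3+v = uXY (u ∈ F_q, u^3 ≠ 27v) has cardinality (q+2)/3. Specifically, the map u ↦ F(u) = u(u^3+216v)/(u^3-27v) is a bijection from {u : u^3 ≠ 27v} to F_q, and j(E_{GH,u,v}) = F(u)^3/v, with x ↦ x^3/v being 3:1 on F_q^*. -/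
/-! A non-cube `v` makes cubing non-injective on `F`, which produces a primitive cube root of
unity; hence `3 ≠ 0`, every nonzero cube has exactly three cube roots, and there are `(q + 2) / 3`
cubes. The map `hessianJRoot v u = u(u³ + 216v)/(u³ - 27v)` is injective: equal values at `a ≠ b`
give `(108v + sp)³ = 27v (s² + 2p)³` for `s = a + b`, `p = ab`, and since `27v` is not a cube both
sides vanish, which forces `2 = 0` and `a = b`. So `hessianJRoot v` permutes `F`, and the
`j`-invariants `(hessianJRoot v u)³ / v` are the `v⁻¹`-multiples of the cubes. -/

open Finset Polynomial

theorem IsPrimitiveRoot.card_nthRootsFinset_pow {R : Type*} [CommRing R] [IsDomain R] {ζ : R}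
    {n : ℕ} (hζ : IsPrimitiveRoot ζ n) {a : R} (ha : a ≠ 0) :
    #(nthRootsFinset n (a ^ n)) = n := by
  classical
  rw [nthRootsFinset_def, Multiset.toFinset_card_of_nodup (hζ.nthRoots_nodup (pow_ne_zero n ha)),
    hζ.card_nthRoots, if_pos ⟨a, rfl⟩]

theorem IsPrimitiveRoot.card_image_pow {F : Type*} [Field F] [Fintype F] [DecidableEq F] {ζ : F}
    {n : ℕ} (hζ : IsPrimitiveRoot ζ n) (hn : 0 < n) :
    n * #(univ.image fun x : F => x ^ n) + 1 = Fintype.card F + n := by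
  set C := univ.image fun x : F => x ^ n
  have hfiber (b : F) : ({x ∈ univ | x ^ n = b} : Finset F) = nthRootsFinset n b := by
    ext; simp [Polynomial.mem_nthRootsFinset hn]
  have h0 : (0 : F) ∈ C := mem_image.mpr ⟨0, mem_univ _, zero_pow hn.ne'⟩
  have hfiber0 : #(nthRootsFinset n (0 : F)) = 1 := by
    rw [card_eq_one]; exact ⟨0, by ext; simp [Polynomial.mem_nthRootsFinset hn, hn.ne']⟩
  have hfiber_ne (b : F) (hb : b ∈ C.erase 0) : #(nthRootsFinset n b) = n := by
    obtain ⟨hb0, hb⟩ := mem_erase.mp hb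
    obtain ⟨a, -, rfl⟩ := mem_image.mp hb
    exact hζ.card_nthRootsFinset_pow (by rintro rfl; exact hb0 (zero_pow hn.ne'))
  have hsum := card_eq_sum_card_image (fun x : F => x ^ n) univ
  simp only [hfiber, card_univ] at hsum
  rw [← add_sum_erase C _ h0, hfiber0, sum_congr rfl hfiber_ne, sum_const, card_erase_of_mem h0,
    smul_eq_mul] at hsum
  obtain ⟨k, hk⟩ := Nat.exists_eq_add_of_le' (card_pos.mpr ⟨0, h0⟩ : 1 ≤ #C)
  rw [hsum, hk, Nat.add_sub_cancel]
  ring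

theorem exists_isPrimitiveRoot_of_not_surjective_pow {F : Type*} [Field F] [Finite F] {p : ℕ}
    [Fact p.Prime] (h : ¬Function.Surjective fun x : F => x ^ p) :
    ∃ ζ : F, IsPrimitiveRoot ζ p := by
  obtain ⟨a, b, hab, hne⟩ : ∃ a b : F, a ^ p = b ^ p ∧ a ≠ b := by
    simpa [Function.Injective] using mt Finite.injective_iff_surjective.mp h
  have hp : p ≠ 0 := (Fact.out : p.Prime).ne_zero
  have hb : b ≠ 0 := by
    rintro rfl
    exact hne (pow_eq_zero_iff hp |>.mp (hab.trans (zero_pow hp)))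
  refine ⟨a / b, IsPrimitiveRoot.iff_orderOf.mpr (orderOf_eq_prime ?_ ?_)⟩
  · rw [div_pow, hab, div_self (pow_ne_zero p hb)]
  · rwa [Ne, div_eq_one_iff_eq hb]

theorem eq_zero_of_pow_eq_mul_pow {K : Type*} [Field K] {n : ℕ} {c x y : K}
    (hc : ¬∃ w, w ^ n = c) (h : x ^ n = c * y ^ n) : y = 0 := by
  by_contra hy
  exact hc ⟨x / y, by rw [div_pow, h, mul_div_assoc, div_self (pow_ne_zero n hy), mul_one]⟩

section Hessian

variable {K : Type*} [Field K]

def hessianJRoot (v u : K) : K := u * (u ^ 3 + 216 * v) / (u ^ 3 - 27 * v)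

theorem pow_three_ne_27_mul (h3 : (3 : K) ≠ 0) {v : K} (hv : ¬∃ w : K, w ^ 3 = v) (u : K) :
    u ^ 3 ≠ 27 * v := fun h => hv ⟨u / 3, by field_simp; linear_combination h⟩

theorem cube_relation_of_hessianJRoot_eq {v a b : K} (ha : a ^ 3 ≠ 27 * v) (hb : b ^ 3 ≠ 27 * v)
    (hab : a ≠ b) (h : hessianJRoot v a = hessianJRoot v b) :
    (108 * v + (a + b) * (a * b)) ^ 3 = 27 * v * ((a + b) ^ 2 + 2 * (a * b)) ^ 3 := by
  rw [hessianJRoot, hessianJRoot, div_eq_div_iff (sub_ne_zero.mpr ha) (sub_ne_zero.mpr hb)] at h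
  have hsymm : (a * b) ^ 3 - 27 * v * ((a + b) ^ 3 + 6 * (a + b) * (a * b)) - 5832 * v ^ 2 = 0 := by
    refine (mul_eq_zero.mp ?_).resolve_left (sub_ne_zero.mpr hab)
    linear_combination h
  linear_combination ((a + b) ^ 3 - 216 * v) * hsymm

theorem hessianJRoot_injective (h3 : (3 : K) ≠ 0) {v : K} (hv : ¬∃ w : K, w ^ 3 = v) :
    Function.Injective (hessianJRoot v) := by
  intro a b h
  by_contra hab
  have hc : ¬∃ w : K, w ^ 3 = 27 * v := fun ⟨w, hw⟩ => pow_three_ne_27_mul h3 hv w hw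
  have key := cube_relation_of_hessianJRoot_eq (pow_three_ne_27_mul h3 hv a)
    (pow_three_ne_27_mul h3 hv b) hab h
  have hT : (a + b) ^ 2 + 2 * (a * b) = 0 := eq_zero_of_pow_eq_mul_pow hc key
  have hS : 108 * v + (a + b) * (a * b) = 0 :=
    pow_eq_zero_iff three_ne_zero |>.mp (by rw [key, hT]; ring)
  -- `(a + b)³ = 27v · 2³`, so `2 = 0` as `27v` is not a cube
  have h2 : (2 : K) = 0 :=
    eq_zero_of_pow_eq_mul_pow hc (x := a + b) (by linear_combination (a + b) * hT - 2 * hS)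
  have hs : a + b = 0 := pow_eq_zero_iff two_ne_zero |>.mp (by linear_combination hT - a * b * h2)
  exact hab (by linear_combination hs - b * h2)

end Hessian

theorem generalized_hessian_j_count_noncube_general
    (F : Type*) [Field F] [Fintype F]
    (v : F) (hv : ¬ ∃ w : F, w ^ 3 = v) :
    {j : F | ∃ u : F, u ^ 3 ≠ 27 * v ∧
        j = (1 / v) * (u * (u ^ 3 + 216 * v) / (u ^ 3 - 27 * v)) ^ 3}.ncard =
      (Fintype.card F + 2) / 3 ∧
    Set.BijOn (fun u : F => u * (u ^ 3 + 216 * v) / (u ^ 3 - 27 * v))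
      {u : F | u ^ 3 ≠ 27 * v} Set.univ ∧
    ∀ x : F, x ≠ 0 →
      {y : F | y ≠ 0 ∧ y ^ 3 / v = x ^ 3 / v}.ncard = 3 := by
  classical
  have hv0 : v ≠ 0 := by rintro rfl; exact hv ⟨0, zero_pow three_ne_zero⟩
  obtain ⟨ζ, hζ⟩ := exists_isPrimitiveRoot_of_not_surjective_pow (p := 3) fun h => hv (h v)
  have h3 : (3 : F) ≠ 0 := by exact_mod_cast hζ.neZero'.out
  have hdom : {u : F | u ^ 3 ≠ 27 * v} = Set.univ :=
    Set.eq_univ_of_forall (pow_three_ne_27_mul h3 hv)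
  have hbij : Function.Bijective (hessianJRoot v) :=
    Finite.injective_iff_bijective.mp (hessianJRoot_injective h3 hv)
  refine ⟨?_, hdom ▸ Set.bijOn_univ.mpr hbij, fun x hx => ?_⟩
  · have hJ : {j : F | ∃ u : F, u ^ 3 ≠ 27 * v ∧
        j = (1 / v) * (u * (u ^ 3 + 216 * v) / (u ^ 3 - 27 * v)) ^ 3} =
        ↑((univ.image fun z : F => z ^ 3).image ((1 / v) * ·)) := by
      ext j
      simp only [Set.mem_ofPred_eq, coe_image, coe_univ, Set.image_univ, Set.mem_image,
        Set.mem_range]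
      constructor
      · rintro ⟨u, -, rfl⟩
        exact ⟨_, ⟨hessianJRoot v u, rfl⟩, rfl⟩
      · rintro ⟨_, ⟨z, rfl⟩, rfl⟩
        obtain ⟨u, rfl⟩ := hbij.2 z
        exact ⟨u, pow_three_ne_27_mul h3 hv u, rfl⟩
    rw [hJ, Set.ncard_coe_finset,
      card_image_of_injective _ (mul_right_injective₀ (one_div_ne_zero hv0))]
    have := hζ.card_image_pow three_pos
    lia
  · have hfib : {y : F | y ≠ 0 ∧ y ^ 3 / v = x ^ 3 / v} = ↑(nthRootsFinset 3 (x ^ 3)) := by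
      ext y
      simp only [Set.mem_ofPred_eq, mem_coe, mem_nthRootsFinset three_pos, div_left_inj' hv0]
      exact ⟨And.right, fun h => ⟨ne_zero_pow three_ne_zero (h ▸ pow_ne_zero 3 hx), h⟩⟩
    rw [hfib, Set.ncard_coe_finset, hζ.card_nthRootsFinset_pow hx]

/-- For `q ≡ 1 (mod 3)` and `v` a non-cube in `F_q^*`, the set of `j`-invariants
`(1/v)(u(u³+216v)/(u³-27v))³` of generalized Hessian curves `X³+Y³+v = uXY` has `(q+2)/3`
elements; the map `u ↦ u(u³+216v)/(u³-27v)` is a bijection from `{u : u³ ≠ 27v}` onto `F_q`,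
and `x ↦ x³/v` is `3:1` on `F_q^*`. -/
theorem generalized_hessian_j_count_noncube
    (F : Type*) [Field F] [Fintype F] (hq : Fintype.card F % 3 = 1)
    (v : F) (hv0 : v ≠ 0) (hv : ¬ ∃ w : F, w ^ 3 = v) :
    {j : F | ∃ u : F, u ^ 3 ≠ 27 * v ∧
        j = (1 / v) * (u * (u ^ 3 + 216 * v) / (u ^ 3 - 27 * v)) ^ 3}.ncard =
      (Fintype.card F + 2) / 3 ∧
    Set.BijOn (fun u : F => u * (u ^ 3 + 216 * v) / (u ^ 3 - 27 * v))
      {u : F | u ^ 3 ≠ 27 * v} Set.univ ∧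
    ∀ x : F, x ≠ 0 →
      {y : F | y ≠ 0 ∧ y ^ 3 / v = x ^ 3 / v}.ncard = 3 :=
  generalized_hessian_j_count_noncube_general F v hv
end

section
/- Let F_q be a finite field. The number of distinct j-invariants of generalized Hessian curves E_{GH,u,v}: X^3+Y^3+v = uXY over F_q (v ∈ F_q^*, u^3 ≠ 27v) equals: q-1 if q ≡ 0 (mod 3); ⌊(3q+1)/4⌋ if q ≡ 1 (mod 3); ⌊q/2⌋ if q ≡ 2 (mod 3). -/
/-!
With `n = u³ / (27 v)` the `j`-invariant of `X³ + Y³ + v = uXY` is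
`hessianJ n = 27 n (n + 8)³ / (n - 1)³`, and every `n ≠ 1` occurs; in characteristic `3` it is
`u³ / v`, which takes every nonzero value. Away from `j = 0, 1728`, the fibre of `hessianJ`
through `n` consists of `n` and the points `((d + 2) / (d - 1))³` for the cube roots `d` of `n`
in `F`, because the curve `hessianJ m = hessianJ n`, `m ≠ n`, is rational, parametrised by `d`.
Let `q = #F`. If `q ≡ 2 (mod 3)` cubing is bijective, so all fibres have two points (except `{0}`
when `q` is even). If `q ≡ 1 (mod 3)` the fibres of non-cubes are singletons and those of cubes
have four points, apart from the fibres `{0, -8}` and `{n, 20 - n}` over `0` and `1728`.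
The number of `j`-invariants is the sum of `1 / #fibre` over `n ≠ 1`.
-/

open Finset
open Polynomial (nthRootsFinset mem_nthRootsFinset nthRootsFinset_def)

theorem card_image_eq_sum_inv_card_fiber {α β : Type*} [DecidableEq β] (f : α → β)
    (s : Finset α) : (#(s.image f) : ℚ) = ∑ x ∈ s, (#{y ∈ s | f y = f x} : ℚ)⁻¹ := by
  rw [card_eq_sum_ones, Nat.cast_sum]
  refine sum_image' _ fun x hx => ?_
  have hpos : (#{y ∈ s | f y = f x} : ℚ) ≠ 0 :=
    Nat.cast_ne_zero.2 (card_ne_zero_of_mem (mem_filter.2 ⟨hx, rfl⟩))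
  rw [sum_congr rfl fun y hy => by rw [(mem_filter.1 hy).2], sum_const, nsmul_eq_mul,
    mul_inv_cancel₀ hpos, Nat.cast_one]

theorem card_filter_sq_eq_le_two {F : Type*} [Field F] [DecidableEq F] (s : Finset F) (p q : F) :
    #{x ∈ s | x ^ 2 = p * x + q} ≤ 2 := by
  by_contra! h
  obtain ⟨a, ha, b, hb, c, hc, hab, hac, hbc⟩ := two_lt_card.1 h
  simp only [mem_filter] at ha hb hc
  have vieta {x y : F} (hx : x ^ 2 = p * x + q) (hy : y ^ 2 = p * y + q) (hxy : x ≠ y) :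
      x + y = p := by
    have : (x - y) * (x + y - p) = 0 := by linear_combination hx - hy
    linear_combination (mul_eq_zero.1 this).resolve_left (sub_ne_zero.2 hxy)
  exact hbc (by linear_combination vieta ha.2 hb.2 hab - vieta ha.2 hc.2 hac)

theorem card_nthRootsFinset_of_isPrimitiveRoot {R : Type*} [CommRing R] [IsDomain R] {k : ℕ}
    {ζ a c : R} (hζ : IsPrimitiveRoot ζ k) (ha : a ≠ 0) (hc : c ^ k = a) :
    #(nthRootsFinset k a) = k := by
  classical
  rw [nthRootsFinset_def, Multiset.toFinset_card_of_nodup (hζ.nthRoots_nodup ha),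
    hζ.card_nthRoots, if_pos ⟨c, hc⟩]

section FiniteField

variable {F : Type*} [Field F] [Fintype F]

theorem card_mod_three_eq_zero_iff : Fintype.card F % 3 = 0 ↔ (3 : F) = 0 := by
  obtain ⟨n, hp, hq⟩ := FiniteField.card F (ringChar F)
  rw [show (3 : F) = ((3 : ℕ) : F) by norm_num, CharP.cast_eq_zero_iff F (ringChar F),
    Nat.prime_dvd_prime_iff_eq hp Nat.prime_three, ← Nat.dvd_iff_mod_eq_zero, hq]
  exact ⟨fun h => (Nat.prime_eq_prime_of_dvd_pow Nat.prime_three hp h).symm,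
    fun h => by rw [h]; exact dvd_pow_self 3 n.ne_zero⟩

theorem pow_three_injective (hq : Fintype.card F % 3 = 2) :
    Function.Injective fun x : F => x ^ 3 := by
  intro x y (h : x ^ 3 = y ^ 3)
  rcases eq_or_ne y 0 with rfl | hy
  · simpa using h
  have h1 : (x / y) ^ 3 = 1 := by rw [div_pow, h, div_self (pow_ne_zero 3 hy)]
  have hxy : x / y ≠ 0 := fun h0 => by simp [h0] at h1
  have hcop : Nat.Coprime 3 (Fintype.card F - 1) :=
    (Nat.Prime.coprime_iff_not_dvd Nat.prime_three).2 (by omega)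
  have : orderOf (x / y) = 1 := Nat.dvd_one.1 (hcop ▸ Nat.dvd_gcd (orderOf_dvd_of_pow_eq_one h1)
    (orderOf_dvd_of_pow_eq_one (FiniteField.pow_card_sub_one_eq_one _ hxy)))
  exact (div_eq_one_iff_eq hy).1 (orderOf_eq_one_iff.1 this)

theorem exists_isPrimitiveRoot_three (hq : Fintype.card F % 3 = 1) :
    ∃ ω : F, IsPrimitiveRoot ω 3 := by
  have : Fact (Nat.Prime 3) := ⟨Nat.prime_three⟩
  obtain ⟨x, hx⟩ := exists_prime_orderOf_dvd_card' (G := Fˣ) 3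
    (by rw [Nat.card_units, Nat.card_eq_fintype_card]; omega)
  exact ⟨x, IsPrimitiveRoot.coe_units_iff.2 (IsPrimitiveRoot.iff_orderOf.2 hx)⟩

theorem sum_card_nthRootsFinset {k : ℕ} (hk : 0 < k) :
    ∑ a : F, #(nthRootsFinset k a) = Fintype.card F := by
  classical
  rw [← card_univ, card_eq_sum_card_fiberwise (f := (· ^ k)) (t := univ) fun _ _ => mem_univ _]
  refine sum_congr rfl fun a _ => congrArg card ?_
  ext x
  simp [mem_nthRootsFinset hk]

end FiniteField

def generalizedHessianJInvariants (F : Type*) [Field F] : Set F :=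
  {j | ∃ v : F, v ≠ 0 ∧ ∃ u : F, u ^ 3 ≠ 27 * v ∧
    j = (1 / v) * (u * (u ^ 3 + 216 * v) / (u ^ 3 - 27 * v)) ^ 3}

section Hessian

variable {F : Type*} [Field F]

theorem nine_ne_zero_of_three_ne_zero (h3 : (3:F) ≠ 0) : (9:F) ≠ 0 := by
  simpa [show (3:F) ^ 2 = 9 by norm_num] using pow_ne_zero 2 h3

theorem twenty_seven_ne_zero_of_three_ne_zero (h3 : (3:F) ≠ 0) : (27:F) ≠ 0 := by
  simpa [show (3:F) ^ 3 = 27 by norm_num] using pow_ne_zero 3 h3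

/-- `hessianJ (d ^ 3)` is the `j`-invariant of the Hessian curve `x³ + y³ + 1 = 3dxy`. -/
def hessianJ (n : F) : F := 27 * n * (n + 8) ^ 3 / (n - 1) ^ 3

theorem hessianJ_div (h3 : (3:F) ≠ 0) {u v : F} (hv : v ≠ 0) (hu : u ^ 3 ≠ 27 * v) :
    hessianJ (u ^ 3 / (27 * v)) = (1 / v) * (u * (u ^ 3 + 216 * v) / (u ^ 3 - 27 * v)) ^ 3 := by
  have h27 := twenty_seven_ne_zero_of_three_ne_zero h3
  have hden : u ^ 3 / (27 * v) - 1 ≠ 0 := by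
    rw [div_sub_one (mul_ne_zero h27 hv)]
    exact div_ne_zero (sub_ne_zero.2 hu) (mul_ne_zero h27 hv)
  rw [hessianJ, div_eq_iff (pow_ne_zero 3 hden)]
  field_simp
  ring

theorem generalizedHessianJInvariants_of_three_eq_zero (h3 : (3:F) = 0) :
    generalizedHessianJInvariants F = {0}ᶜ := by
  have h27 : (27:F) = 0 := by linear_combination 9 * h3
  have h216 : (216:F) = 0 := by linear_combination 72 * h3
  ext j
  simp only [generalizedHessianJInvariants, h27, h216, zero_mul, add_zero, sub_zero,
    Set.mem_ofPred_eq, Set.mem_compl_iff, Set.mem_singleton_iff]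
  constructor
  · rintro ⟨v, hv, u, hu, rfl⟩
    have hu0 : u ≠ 0 := fun h => hu (by rw [h, zero_pow three_ne_zero])
    rw [mul_div_assoc, div_self hu, mul_one]
    exact mul_ne_zero (one_div_ne_zero hv) (pow_ne_zero 3 hu0)
  · intro hj
    exact ⟨j⁻¹, inv_ne_zero hj, 1, by simp, by field_simp⟩

theorem hessianJ_eq_zero_iff (h3 : (3:F) ≠ 0) {n : F} (hn : n ≠ 1) :
    hessianJ n = 0 ↔ n = 0 ∨ n = -8 := by
  have h27 := twenty_seven_ne_zero_of_three_ne_zero h3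
  simp [hessianJ, sub_eq_zero, hn, h27, add_eq_zero_iff_eq_neg]

theorem hessianJ_eq_1728_iff (h3 : (3:F) ≠ 0) {n : F} (hn : n ≠ 1) :
    hessianJ n = 1728 ↔ n ^ 2 = 20 * n + 8 := by
  have h27 := twenty_seven_ne_zero_of_three_ne_zero h3
  have key : 27 * n * (n + 8) ^ 3 - 1728 * (n - 1) ^ 3 = 27 * (n ^ 2 - (20 * n + 8)) ^ 2 := by
    ring
  rw [hessianJ, div_eq_iff (pow_ne_zero 3 (sub_ne_zero.2 hn)), ← sub_eq_zero, key,
    mul_eq_zero, or_iff_right h27, pow_eq_zero_iff two_ne_zero, sub_eq_zero]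

theorem neg_eight_ne_one (h3 : (3:F) ≠ 0) : (-8 : F) ≠ 1 := fun h =>
  h3 (pow_eq_zero_iff two_ne_zero |>.1 (by linear_combination -h))

theorem sq_pow_three_eq_of_sq_eq {μ d : F} (hμ : μ ^ 3 = 1)
    (hd : d ^ 2 = 2 * μ * d + 2 * μ ^ 2) :
    (d ^ 3) ^ 2 = 20 * d ^ 3 + 8 := by
  linear_combination (d^4 + 2*μ*d^3 + 6*μ^2*d^2 + 16*μ^3*d - 20*d + 44*μ^4 - 40*μ) * hd
    + (8 + 88*μ^3 + 120*μ^2*d) * hμ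

theorem two_ne_zero_of_sq_eq {n : F} (hn : n ^ 2 = 20 * n + 8) (hn0 : n ≠ 0) : (2 : F) ≠ 0 :=
  fun h2 => hn0 (pow_eq_zero_iff two_ne_zero |>.1 (by linear_combination hn + (10 * n + 4) * h2))

theorem sub_four_div_six_pow_three_of_sq_eq (h3 : (3:F) ≠ 0) {n : F} (hn : n ^ 2 = 20 * n + 8)
    (hn0 : n ≠ 0) :
    ((n - 4) / 6) ^ 3 = n := by
  have h6 : (6 : F) ^ 3 ≠ 0 := by
    have := mul_ne_zero (two_ne_zero_of_sq_eq hn hn0) h3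
    norm_num at this
    exact pow_ne_zero 3 this
  rw [div_pow, div_eq_iff h6]
  linear_combination (n + 8) * hn

def hessianInvolution (d : F) : F := (d + 2) / (d - 1)

theorem hessianJ_hessianInvolution_pow (h3 : (3:F) ≠ 0) {d : F} (hd : d ^ 3 ≠ 1) :
    hessianJ (hessianInvolution d ^ 3) = hessianJ (d ^ 3) := by
  have hd1 : d - 1 ≠ 0 := fun h => hd (by rw [sub_eq_zero.1 h, one_pow])
  have h9 := nine_ne_zero_of_three_ne_zero h3
  have hq : d ^ 2 + d + 1 ≠ 0 := fun h => hd (by linear_combination (d - 1) * h)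
  have hι : hessianInvolution d ^ 3 - 1 ≠ 0 := by
    rw [hessianInvolution, div_pow, div_sub_one (pow_ne_zero 3 hd1)]
    refine div_ne_zero ?_ (pow_ne_zero 3 hd1)
    rw [show (d + 2) ^ 3 - (d - 1) ^ 3 = 9 * (d ^ 2 + d + 1) by ring]
    exact mul_ne_zero h9 hq
  rw [hessianJ, hessianJ, div_eq_div_iff (pow_ne_zero 3 hι) (pow_ne_zero 3 (sub_ne_zero.2 hd)),
    hessianInvolution]
  field_simp
  ring

theorem hessianInvolution_pow_ne_one (h3 : (3:F) ≠ 0) {d : F} (hd : d ^ 3 ≠ 1) :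
    hessianInvolution d ^ 3 ≠ 1 := by
  have hd1 : d - 1 ≠ 0 := fun h => hd (by rw [sub_eq_zero.1 h, one_pow])
  have h9 := nine_ne_zero_of_three_ne_zero h3
  rw [hessianInvolution, div_pow, Ne, div_eq_one_iff_eq (pow_ne_zero 3 hd1)]
  intro h
  have : (9:F) * (d ^ 2 + d + 1) = 0 := by linear_combination h
  exact hd (by linear_combination (d - 1) * (mul_eq_zero.1 this).resolve_left h9)

def hessianCorrespondence (n m : F) : F :=
  n^3*m^3 - 3*n^3*m^2 + 3*n^3*m - n^3 - 3*n^2*m^3 - 261*n^2*m^2 - 441*n^2*m - 24*n^2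
    + 3*n*m^3 - 441*n*m^2 + 2088*n*m - 192*n - m^3 - 24*m^2 - 192*m - 512

theorem sub_mul_hessianCorrespondence (n m : F) :
    (m - n) * hessianCorrespondence n m =
      m * (m + 8) ^ 3 * (n - 1) ^ 3 - n * (n + 8) ^ 3 * (m - 1) ^ 3 := by
  unfold hessianCorrespondence; ring

/-- `hD` is the vanishing of a factor of the denominator of the inverse parametrisation in
`exists_pow_three_eq_of_hessianJ_eq`. -/
theorem sq_eq_of_hessianCorrespondence_eq_zero_of_degenerate (h3 : (3:F) ≠ 0) {n m : F}
    (hmn : m ≠ n) (hC : hessianCorrespondence n m = 0) (hD : n * (m + 2) = 32 - 2 * m) :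
    n ^ 2 = 20 * n + 8 := by
  unfold hessianCorrespondence at hC
  have h27 := twenty_seven_ne_zero_of_three_ne_zero h3
  by_cases hm2 : m + 2 = 0
  · have h2 : (2:F) = 0 := by
      have h36 : (2:F) * (2 * 3 * 3) = 0 := by linear_combination -hD + (n + 2) * hm2
      simpa [h3] using h36
    have hm0 : m = 0 := by linear_combination hm2 - h2
    have hn8 : (n + 8) ^ 3 = 0 := by rw [hm0] at hC; linear_combination -hC
    have := pow_eq_zero_iff three_ne_zero |>.1 hn8
    exact absurd (by linear_combination hm0 - this + 4 * h2) hmn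
  have hm8 : m + 8 ≠ 0 := by
    intro hm8
    have : (n + 8) * (m + 2) = 0 := by linear_combination hD + 6 * hm8
    exact hmn (by linear_combination hm8 - (mul_eq_zero.1 this).resolve_right hm2)
  have hbig : (27:F) * ((m ^ 2 - 20 * m - 8) ^ 2 * (m + 8) ^ 2) = 0 := by
    linear_combination (-(m+2)^3)*hC +
      (-4*n^2 + 8*n^2*m - n^2*m^2 - 5*n^2*m^3 + n^2*m^4 + n^2*m^5
       - 160*n - 1696*n*m - 2938*n*m^2 - 1523*n*m^3 - 239*n*m^4 - 5*n*m^5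
       - 3328 - 18112*m - 26068*m^2 - 4862*m^3 - 131*m^4 + 13*m^5)*hD
  have hm20 : m ^ 2 - 20 * m - 8 = 0 := by simpa [h27, hm8] using hbig
  have hn20 : (m + 2) * (n - (20 - m)) = 0 := by linear_combination hD + hm20
  have := (mul_eq_zero.1 hn20).resolve_left hm2
  linear_combination (n - m) * this + hm20

theorem exists_pow_three_eq_of_hessianJ_eq (h3 : (3:F) ≠ 0) {n m : F}
    (hn : n ≠ 1) (hm : m ≠ 1) (hmn : m ≠ n) (hn1728 : n ^ 2 ≠ 20 * n + 8)
    (H : hessianJ m = hessianJ n) :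
    ∃ d, d ^ 3 = n ∧ hessianInvolution d ^ 3 = m := by
  have h27 := twenty_seven_ne_zero_of_three_ne_zero h3
  have hC : hessianCorrespondence n m = 0 := by
    rw [hessianJ, hessianJ, div_eq_div_iff (pow_ne_zero 3 (sub_ne_zero.2 hm))
      (pow_ne_zero 3 (sub_ne_zero.2 hn))] at H
    have h : (27:F) * ((m - n) * hessianCorrespondence n m) = 27 * 0 := by
      rw [sub_mul_hessianCorrespondence]; linear_combination H
    exact (mul_eq_zero.1 (mul_left_cancel₀ h27 h)).resolve_left (sub_ne_zero.2 hmn)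
  set D := (m - 1) * (n * (m + 2) + 2 * m - 32)
  have hD : D ≠ 0 := by
    refine mul_ne_zero (sub_ne_zero.2 hm) fun hD => hn1728 ?_
    exact sq_eq_of_hessianCorrespondence_eq_zero_of_degenerate h3 hmn hC (by linear_combination hD)
  -- The curve `hessianCorrespondence n m = 0` is rational, parametrised by
  -- `d ↦ (d ^ 3, hessianInvolution d ^ 3)`; `d` below is the inverse of this parametrisation.
  set d := (m + 8) * (n * (2 * m + 1) + m - 4) / D with hd_def
  have hd3 : d ^ 3 = n := by
    rw [hd_def, div_pow, div_eq_iff (pow_ne_zero 3 hD)]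
    unfold hessianCorrespondence at hC
    linear_combination (-(n*(m+2)^3 + (m-4)^3))*hC
  refine ⟨d, hd3, ?_⟩
  have hd1 : d - 1 ≠ 0 := fun h => hn (by rw [← hd3, sub_eq_zero.1 h, one_pow])
  rw [hessianInvolution, div_pow, div_eq_iff (pow_ne_zero 3 hd1), hd_def]
  field_simp
  unfold hessianCorrespondence at hC
  linear_combination (-(m^2-20*m-8)*(m+8)*(m-1)) * hC

theorem pow_three_eq_of_hessianInvolution_pow_eq_self {d : F} (hd : d ^ 3 ≠ 1)
    (h : hessianInvolution d ^ 3 = d ^ 3) : d ^ 3 = -8 ∨ (d ^ 3) ^ 2 = 20 * d ^ 3 + 8 := by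
  have hd1 : d - 1 ≠ 0 := fun h => hd (by rw [sub_eq_zero.1 h, one_pow])
  rw [hessianInvolution, div_pow, div_eq_iff (pow_ne_zero 3 hd1)] at h
  have : (d ^ 2 - 2 * d - 2) * ((d ^ 2 + d + 1) * (d ^ 2 - 2 * d + 4)) = 0 := by
    linear_combination -h
  rcases mul_eq_zero.1 this with h | h
  · exact Or.inr (sq_pow_three_eq_of_sq_eq (μ := 1) (one_pow 3) (by linear_combination h))
  rcases mul_eq_zero.1 h with h | h
  · exact absurd (by linear_combination (d - 1) * h) hd
  · exact Or.inl (by linear_combination (d + 2) * h)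

theorem pow_three_sub_pow_three_eq {ζ : F} (hζ : ζ ^ 2 + ζ + 1 = 0) (a b : F) :
    a ^ 3 - b ^ 3 = (a - b) * ((a - ζ * b) * (a - ζ ^ 2 * b)) := by
  linear_combination (a - b) * (a * b + b ^ 2 * (1 - ζ)) * hζ

theorem pow_three_eq_of_hessianInvolution_pow_mul_eq (h3 : (3:F) ≠ 0) {ζ d : F}
    (hζ : ζ ^ 2 + ζ + 1 = 0) (hd0 : d ≠ 0) (hd : d ^ 3 ≠ 1)
    (h : hessianInvolution (ζ * d) ^ 3 = hessianInvolution d ^ 3) :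
    d ^ 3 = -8 ∨ (d ^ 3) ^ 2 = 20 * d ^ 3 + 8 := by
  have hζ3 : ζ ^ 3 = 1 := by linear_combination (ζ - 1) * hζ
  have hd1 : d - 1 ≠ 0 := fun h => hd (by rw [sub_eq_zero.1 h, one_pow])
  have hζd1 : ζ * d - 1 ≠ 0 := fun h => hd (by
    linear_combination (ζ ^ 2 * d ^ 2 + ζ * d + 1) * h - d ^ 3 * hζ3)
  have hζ1 : 1 - ζ ≠ 0 := fun h => h3 (by linear_combination hζ + (ζ + 2) * h)
  rw [hessianInvolution, hessianInvolution, div_pow, div_pow,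
    div_eq_div_iff (pow_ne_zero 3 hζd1) (pow_ne_zero 3 hd1), ← mul_pow, ← mul_pow,
    ← sub_eq_zero, pow_three_sub_pow_three_eq hζ] at h
  have hAB : (ζ * d + 2) * (d - 1) - (d + 2) * (ζ * d - 1) ≠ 0 := by
    rw [show (ζ * d + 2) * (d - 1) - (d + 2) * (ζ * d - 1) = 3 * d * (1 - ζ) by ring]
    exact mul_ne_zero (mul_ne_zero h3 hd0) hζ1
  rcases mul_eq_zero.1 ((mul_eq_zero.1 h).resolve_left hAB) with h | h
  · have h2ζ : 2 * ζ + 1 ≠ 0 := fun h0 => h3 (by linear_combination (-(2*ζ+1))*h0 + 4*hζ)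
    have : (2 * ζ + 1) * (d ^ 2 - 2 * ζ * d - 2 * ζ ^ 2) = 0 := by
      linear_combination h + (d^2-2*d-4*ζ+2)*hζ
    exact Or.inr (sq_pow_three_eq_of_sq_eq hζ3
      (by linear_combination (mul_eq_zero.1 this).resolve_left h2ζ))
  · have : (1 - ζ) * ((d - ζ) * (d + 2 * ζ)) = 0 := by
      linear_combination -h + (1-ζ)*(d^2+2*d-2)*hζ
    rcases mul_eq_zero.1 ((mul_eq_zero.1 this).resolve_left hζ1) with h | h
    · exact absurd (by linear_combination (d^2+d*ζ+ζ^2)*h + hζ3) hd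
    · exact Or.inl (by linear_combination (d^2-2*d*ζ+4*ζ^2)*h - 8*hζ3)

theorem hessianInvolution_pow_injOn (h3 : (3:F) ≠ 0) {n : F} (hn : n ≠ 1) (h0 : n ≠ 0)
    (h8 : n ≠ -8) (h1728 : n ^ 2 ≠ 20 * n + 8) :
    Set.InjOn (fun d => hessianInvolution d ^ 3) {d | d ^ 3 = n} := by
  intro d (hd : d ^ 3 = n) e (he : e ^ 3 = n) h
  have hd0 : d ≠ 0 := by rintro rfl; exact h0 (by rw [← hd]; ring)
  have hζ3 : (e / d) ^ 3 = 1 := by rw [div_pow, hd, he, div_self h0]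
  by_contra hde
  have hζ1 : e / d - 1 ≠ 0 := sub_ne_zero.2 fun h1 => hde ((div_eq_one_iff_eq hd0).1 h1).symm
  have hζ : (e / d) ^ 2 + e / d + 1 = 0 :=
    mul_left_cancel₀ hζ1 (by linear_combination hζ3)
  have h' : hessianInvolution (e / d * d) ^ 3 = hessianInvolution d ^ 3 := by
    rw [div_mul_cancel₀ e hd0]; exact h.symm
  rcases pow_three_eq_of_hessianInvolution_pow_mul_eq h3 hζ hd0 (hd ▸ hn) h' with h | h
  · exact h8 (hd ▸ h)
  · exact h1728 (hd ▸ h)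

section Counting

variable [Fintype F] [DecidableEq F]

theorem generalizedHessianJInvariants_eq_image (h3 : (3:F) ≠ 0) :
    generalizedHessianJInvariants F = ↑((univ.erase (1 : F)).image hessianJ) := by
  have h27 := twenty_seven_ne_zero_of_three_ne_zero h3
  ext j
  simp only [generalizedHessianJInvariants, Set.mem_ofPred_eq, coe_image, coe_erase, coe_univ,
    Set.mem_image, Set.mem_sdiff, Set.mem_univ, Set.mem_singleton_iff, true_and]
  constructor
  · rintro ⟨v, hv, u, hu, rfl⟩
    refine ⟨u ^ 3 / (27 * v), fun h => hu ?_, hessianJ_div h3 hv hu⟩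
    rwa [div_eq_one_iff_eq (mul_ne_zero h27 hv)] at h
  · rintro ⟨n, hn, rfl⟩
    rcases eq_or_ne n 0 with rfl | hn0
    · refine ⟨1, one_ne_zero, 0, by simpa using h27.symm, ?_⟩
      simp [hessianJ]
    · have hu : (3 : F) ^ 3 ≠ 27 * n⁻¹ := fun h => hn (by
        rw [show (3 : F) ^ 3 = 27 by norm_num, ← div_eq_mul_inv, eq_div_iff hn0] at h
        exact mul_left_cancel₀ h27 (by rw [h, mul_one]))
      refine ⟨n⁻¹, inv_ne_zero hn0, 3, hu, ?_⟩
      rw [← hessianJ_div h3 (inv_ne_zero hn0) hu]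
      congr 1
      field_simp
      norm_num

def hessianFiber (n : F) : Finset F := {m ∈ univ.erase 1 | hessianJ m = hessianJ n}

theorem hessianFiber_of_hessianJ_eq_zero (h3 : (3:F) ≠ 0) {n : F} (hn : hessianJ n = 0) :
    hessianFiber n = {0, -8} := by
  have h81 := neg_eight_ne_one h3
  ext m
  simp only [hessianFiber, mem_filter, mem_erase, mem_univ, and_true, mem_insert, mem_singleton, hn]
  refine ⟨fun ⟨hm, h⟩ => (hessianJ_eq_zero_iff h3 hm).1 h, fun h => ?_⟩
  have hm : m ≠ 1 := by rcases h with rfl | rfl; exacts [zero_ne_one, h81]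
  exact ⟨hm, (hessianJ_eq_zero_iff h3 hm).2 h⟩

theorem hessianFiber_of_sq_eq (h3 : (3:F) ≠ 0) {n : F} (hn : n ^ 2 = 20 * n + 8) :
    hessianFiber n = {n, 20 - n} := by
  have ne_one {m : F} (hm : m ^ 2 = 20 * m + 8) : m ≠ 1 := fun h => h3 (by
    have : (3:F) ^ 3 = 0 := by rw [h] at hm; linear_combination -hm
    exact pow_eq_zero_iff three_ne_zero |>.1 this)
  have hn1 := ne_one hn
  ext m
  simp only [hessianFiber, mem_filter, mem_erase, mem_univ, and_true, mem_insert, mem_singleton,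
    (hessianJ_eq_1728_iff h3 hn1).2 hn]
  constructor
  · rintro ⟨hm, h⟩
    have : (m - n) * (m - (20 - n)) = 0 := by
      linear_combination (hessianJ_eq_1728_iff h3 hm).1 h - hn
    simpa [sub_eq_zero] using this
  · intro h
    have hm : m ^ 2 = 20 * m + 8 := by
      rcases h with rfl | rfl
      · exact hn
      · linear_combination hn
    exact ⟨ne_one hm, (hessianJ_eq_1728_iff h3 (ne_one hm)).2 hm⟩

theorem hessianFiber_eq_insert_image (h3 : (3:F) ≠ 0) {n : F} (hn : n ≠ 1) (h0 : n ≠ 0)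
    (h8 : n ≠ -8) (h1728 : n ^ 2 ≠ 20 * n + 8) :
    hessianFiber n =
      insert n ((nthRootsFinset 3 n).image fun d => hessianInvolution d ^ 3) := by
  ext m
  simp only [hessianFiber, mem_filter, mem_erase, mem_univ, and_true, mem_insert, mem_image,
    mem_nthRootsFinset three_pos]
  constructor
  · rintro ⟨hm, h⟩
    by_cases hmn : m = n
    · exact Or.inl hmn
    exact Or.inr (exists_pow_three_eq_of_hessianJ_eq h3 hn hm hmn h1728 h)
  · rintro (rfl | ⟨d, rfl, rfl⟩)
    · exact ⟨hn, rfl⟩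
    · exact ⟨hessianInvolution_pow_ne_one h3 hn, hessianJ_hessianInvolution_pow h3 hn⟩

theorem card_hessianFiber (h3 : (3:F) ≠ 0) {n : F} (hn : n ≠ 1) (h0 : n ≠ 0)
    (h8 : n ≠ -8) (h1728 : n ^ 2 ≠ 20 * n + 8) :
    #(hessianFiber n) = #(nthRootsFinset 3 n) + 1 := by
  rw [hessianFiber_eq_insert_image h3 hn h0 h8 h1728, card_insert_of_notMem, card_image_of_injOn]
  · exact (hessianInvolution_pow_injOn h3 hn h0 h8 h1728).mono fun d hd =>
      (mem_nthRootsFinset three_pos n).1 hd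
  · simp only [mem_image, mem_nthRootsFinset three_pos, not_exists, not_and]
    rintro d rfl h
    rcases pow_three_eq_of_hessianInvolution_pow_eq_self hn h with h | h
    exacts [h8 h, h1728 h]

theorem card_hessianFiber_of_hessianJ_eq_zero (h3 : (3:F) ≠ 0) {n : F} (hn : hessianJ n = 0) :
    #(hessianFiber n) = if (2 : F) = 0 then 1 else 2 := by
  rw [hessianFiber_of_hessianJ_eq_zero h3 hn]
  split_ifs with h2
  · rw [show (-8 : F) = 0 by linear_combination -4 * h2, pair_eq_singleton, card_singleton]
  · refine card_pair fun h => h2 ?_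
    exact pow_eq_zero_iff three_ne_zero |>.1 (by linear_combination h)

theorem card_hessianFiber_of_sq_eq (h3 : (3:F) ≠ 0) {n : F} (hn : n ^ 2 = 20 * n + 8)
    (hn0 : n ≠ 0) : #(hessianFiber n) = 2 := by
  have h2 := two_ne_zero_of_sq_eq hn hn0
  rw [hessianFiber_of_sq_eq h3 hn]
  refine card_pair fun h => ?_
  have h108 : (2 : F) ^ 2 * 3 ^ 3 = 0 := by
    have hn10 : n = 10 := (mul_right_inj' h2).1 (by linear_combination h)
    rw [hn10] at hn
    linear_combination -hn
  simp [h2, h3] at h108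

theorem two_div_card_hessianFiber (hq : Fintype.card F % 3 = 2) {n : F} (hn : n ≠ 1) :
    (2 : ℚ) / #(hessianFiber n) = 1 + if n = 0 ∧ (2 : F) = 0 then 1 else 0 := by
  have h3 : (3 : F) ≠ 0 := by rw [Ne, ← card_mod_three_eq_zero_iff]; omega
  by_cases hz : hessianJ n = 0
  · rw [card_hessianFiber_of_hessianJ_eq_zero h3 hz]
    by_cases h2 : (2 : F) = 0
    · have hn0 : n = 0 := by
        rcases (hessianJ_eq_zero_iff h3 hn).1 hz with h | h
        exacts [h, by linear_combination h - 4 * h2]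
      simp only [h2, hn0, and_self, if_true]
      norm_num
    · simp only [h2, and_false, if_false]
      norm_num
  have hn0 : n ≠ 0 := fun h => hz ((hessianJ_eq_zero_iff h3 hn).2 (Or.inl h))
  have hn8 : n ≠ -8 := fun h => hz ((hessianJ_eq_zero_iff h3 hn).2 (Or.inr h))
  rw [if_neg fun h => hn0 h.1]
  by_cases h1728 : n ^ 2 = 20 * n + 8
  · rw [card_hessianFiber_of_sq_eq h3 h1728 hn0]
    norm_num
  · obtain ⟨c, hc⟩ := Finite.surjective_of_injective (pow_three_injective hq) n
    rw [card_hessianFiber h3 hn hn0 hn8 h1728, card_eq_one.2 ⟨c, ?_⟩]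
    · norm_num
    ext d
    rw [mem_nthRootsFinset three_pos, mem_singleton, ← hc]
    exact (pow_three_injective hq).eq_iff

theorem four_div_card_hessianFiber_of_hessianJ_eq_zero {ω : F} (hω : IsPrimitiveRoot ω 3) {n : F}
    (hn : n ≠ 1) (hz : hessianJ n = 0) :
    (4 : ℚ) / #(hessianFiber n) = 4 - #(nthRootsFinset 3 n) +
      ((if n = -8 then 1 else 0) - (if n = 0 then 1 else 0) +
        (if n ^ 2 = 20 * n + 8 then 1 else 0)) := by
  have h3 : (3 : F) ≠ 0 := by simpa using hω.neZero'.out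
  have hroots0 : #(nthRootsFinset 3 (0 : F)) = 1 :=
    card_eq_one.2 ⟨0, by ext d; simp [mem_nthRootsFinset three_pos]⟩
  rw [card_hessianFiber_of_hessianJ_eq_zero h3 hz]
  by_cases h2 : (2 : F) = 0
  · have h8 : (8 : F) = 0 := by linear_combination 4 * h2
    have hn0 : n = 0 := by
      rcases (hessianJ_eq_zero_iff h3 hn).1 hz with h | h
      exacts [h, by linear_combination h - h8]
    subst hn0
    simp only [h2, h8, hroots0, if_true, neg_zero]
    norm_num
  have h8 : (8 : F) ≠ 0 := fun h =>
    h2 (pow_eq_zero_iff three_ne_zero |>.1 (by linear_combination h))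
  have h216 : (-8 : F) ^ 2 ≠ 20 * -8 + 8 := fun h => by
    have : (2 : F) ^ 3 * 3 ^ 3 = 0 := by linear_combination h
    simp [h2, h3] at this
  rcases (hessianJ_eq_zero_iff h3 hn).1 hz with rfl | rfl
  · norm_num [h2, hroots0, h8, h8.symm]
  · rw [card_nthRootsFinset_of_isPrimitiveRoot hω (neg_ne_zero.2 h8) (c := -2) (by norm_num)]
    simp only [h2, h216, if_false, if_true, neg_eq_zero, h8]
    norm_num

/-- Generic fibres have `#(nthRootsFinset 3 n) + 1 ∈ {1, 4}` points; the indicator terms correct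
this on the fibres `{0, -8}` and `{n, 20 - n}` over `j = 0` and `j = 1728`. -/
theorem four_div_card_hessianFiber {ω : F} (hω : IsPrimitiveRoot ω 3) {n : F} (hn : n ≠ 1) :
    (4 : ℚ) / #(hessianFiber n) = 4 - #(nthRootsFinset 3 n) +
      ((if n = -8 then 1 else 0) - (if n = 0 then 1 else 0) +
        (if n ^ 2 = 20 * n + 8 then 1 else 0)) := by
  have h3 : (3 : F) ≠ 0 := by simpa using hω.neZero'.out
  by_cases hz : hessianJ n = 0
  · exact four_div_card_hessianFiber_of_hessianJ_eq_zero hω hn hz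
  have hn0 : n ≠ 0 := fun h => hz ((hessianJ_eq_zero_iff h3 hn).2 (Or.inl h))
  have hn8 : n ≠ -8 := fun h => hz ((hessianJ_eq_zero_iff h3 hn).2 (Or.inr h))
  simp only [hn0, hn8, if_false]
  by_cases h1728 : n ^ 2 = 20 * n + 8
  · rw [card_hessianFiber_of_sq_eq h3 h1728 hn0,
      card_nthRootsFinset_of_isPrimitiveRoot hω hn0
        (sub_four_div_six_pow_three_of_sq_eq h3 h1728 hn0), if_pos h1728]
    norm_num
  rw [card_hessianFiber h3 hn hn0 hn8 h1728, if_neg h1728]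
  by_cases hc : ∃ c, c ^ 3 = n
  · rw [card_nthRootsFinset_of_isPrimitiveRoot hω hn0 hc.choose_spec]
    norm_num
  · rw [card_eq_zero.2 (eq_empty_of_forall_notMem fun d hd =>
      hc ⟨d, (mem_nthRootsFinset three_pos n).1 hd⟩)]
    norm_num

theorem card_image_hessianJ_eq_sum :
    (#((univ.erase (1 : F)).image hessianJ) : ℚ) =
      ∑ n ∈ univ.erase (1 : F), (#(hessianFiber n) : ℚ)⁻¹ :=
  card_image_eq_sum_inv_card_fiber _ _

theorem card_image_hessianJ_of_card_mod_three_eq_two (hq : Fintype.card F % 3 = 2) :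
    #((univ.erase (1 : F)).image hessianJ) = Fintype.card F / 2 := by
  have hsum : (2 * #((univ.erase (1 : F)).image hessianJ) : ℚ) =
      ∑ n ∈ univ.erase (1 : F), (1 + if n = 0 ∧ (2 : F) = 0 then 1 else 0) := by
    rw [card_image_hessianJ_eq_sum, mul_sum]
    exact sum_congr rfl fun n hn => by
      rw [← div_eq_mul_inv, two_div_card_hessianFiber hq (ne_of_mem_erase hn)]
  simp only [sum_add_distrib, sum_const, card_erase_of_mem (mem_univ _), card_univ, ite_and,
    sum_ite_eq', mem_erase, ne_eq, zero_ne_one, not_false_eq_true, mem_univ, and_self,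
    if_true, nsmul_eq_mul, mul_one] at hsum
  have hq1 : 1 ≤ Fintype.card F := Fintype.card_pos
  split_ifs at hsum
  · have : 2 * #((univ.erase (1 : F)).image hessianJ) = Fintype.card F - 1 + 1 := by
      exact_mod_cast hsum
    omega
  · have : 2 * #((univ.erase (1 : F)).image hessianJ) = Fintype.card F - 1 := by
      rw [add_zero] at hsum; exact_mod_cast hsum
    omega

theorem card_image_hessianJ_of_card_mod_three_eq_one (hq : Fintype.card F % 3 = 1) :
    #((univ.erase (1 : F)).image hessianJ) = (3 * Fintype.card F + 1) / 4 := by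
  obtain ⟨ω, hω⟩ := exists_isPrimitiveRoot_three hq
  have hsum : (4 * #((univ.erase (1 : F)).image hessianJ) : ℚ) =
      ∑ n ∈ univ.erase (1 : F), ((4 : ℚ) - #(nthRootsFinset 3 n) +
        ((if n = -8 then 1 else 0) - (if n = 0 then 1 else 0) +
          (if n ^ 2 = 20 * n + 8 then 1 else 0))) := by
    rw [card_image_hessianJ_eq_sum, mul_sum]
    exact sum_congr rfl fun n hn => by
      rw [← div_eq_mul_inv, four_div_card_hessianFiber hω (ne_of_mem_erase hn)]
  have hroots :
      ∑ n ∈ univ.erase (1 : F), (#(nthRootsFinset 3 n) : ℚ) = Fintype.card F - 3 := by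
    rw [sum_erase_eq_sub (mem_univ _), ← Nat.cast_sum, sum_card_nthRootsFinset three_pos,
      hω.card_nthRootsFinset]
    norm_num
  have h81 : (-8 : F) ≠ 1 := neg_eight_ne_one (by simpa using hω.neZero'.out)
  have hq1 : 1 ≤ Fintype.card F := Fintype.card_pos
  rw [sum_add_distrib, sum_sub_distrib, sum_add_distrib, sum_sub_distrib, sum_const, hroots,
    sum_ite_eq', sum_ite_eq', sum_boole, if_pos (mem_erase.2 ⟨h81, mem_univ _⟩),
    if_pos (mem_erase.2 ⟨zero_ne_one, mem_univ _⟩), card_erase_of_mem (mem_univ _), card_univ,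
    nsmul_eq_mul, Nat.cast_sub hq1] at hsum
  have ha := card_filter_sq_eq_le_two (univ.erase (1 : F)) 20 8
  have : 4 * #((univ.erase (1 : F)).image hessianJ) + 1 =
      3 * Fintype.card F + #{x ∈ univ.erase (1 : F) | x ^ 2 = 20 * x + 8} := by
    exact_mod_cast (by linear_combination hsum :
      (4 * #((univ.erase (1 : F)).image hessianJ) + 1 : ℚ) =
        3 * Fintype.card F + #{x ∈ univ.erase (1 : F) | x ^ 2 = 20 * x + 8})
  omega

end Counting

end Hessian

/-- The number of distinct `j`-invariants `(1/v)(u(u³+216v)/(u³-27v))³` of generalized Hessian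
curves `X³+Y³+v = uXY` over `F_q`, as `v` ranges over `F_q^*` and `u` over `{u : u³ ≠ 27v}`. -/
theorem generalized_hessian_j_count
    (F : Type*) [Field F] [Fintype F] :
    (Fintype.card F % 3 = 0 →
      {j : F | ∃ v : F, v ≠ 0 ∧ ∃ u : F, u ^ 3 ≠ 27 * v ∧
          j = (1 / v) * (u * (u ^ 3 + 216 * v) / (u ^ 3 - 27 * v)) ^ 3}.ncard =
        Fintype.card F - 1) ∧
    (Fintype.card F % 3 = 1 →
      {j : F | ∃ v : F, v ≠ 0 ∧ ∃ u : F, u ^ 3 ≠ 27 * v ∧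
          j = (1 / v) * (u * (u ^ 3 + 216 * v) / (u ^ 3 - 27 * v)) ^ 3}.ncard =
        (3 * Fintype.card F + 1) / 4) ∧
    (Fintype.card F % 3 = 2 →
      {j : F | ∃ v : F, v ≠ 0 ∧ ∃ u : F, u ^ 3 ≠ 27 * v ∧
          j = (1 / v) * (u * (u ^ 3 + 216 * v) / (u ^ 3 - 27 * v)) ^ 3}.ncard =
        Fintype.card F / 2) := by
  classical
  change (_ → (generalizedHessianJInvariants F).ncard = _) ∧
    (_ → (generalizedHessianJInvariants F).ncard = _) ∧
    (_ → (generalizedHessianJInvariants F).ncard = _)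
  have ncard_eq (hq : Fintype.card F % 3 ≠ 0) : (generalizedHessianJInvariants F).ncard =
      #((univ.erase (1 : F)).image hessianJ) := by
    rw [generalizedHessianJInvariants_eq_image (mt card_mod_three_eq_zero_iff.2 hq),
      Set.ncard_coe_finset]
  refine ⟨fun hq => ?_, fun hq => ?_, fun hq => ?_⟩
  · rw [generalizedHessianJInvariants_of_three_eq_zero (card_mod_three_eq_zero_iff.1 hq),
      Set.ncard_compl, Set.ncard_singleton, Nat.card_eq_fintype_card]
  · rw [ncard_eq (by omega), card_image_hessianJ_of_card_mod_three_eq_one hq]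
  · rw [ncard_eq (by omega), card_image_hessianJ_of_card_mod_three_eq_two hq]
end
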